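/- Let G = (V,E) be a finite oriented graph with signed incidence matrix D, admittance vector y ∈ ℝ^{|E|} with Y = diag(y), and weighted Laplacian L = D Y Dᵀ. Then for any vertex v, the determinant of the matrix L(v|v) obtained from L by deleting the row and column of v equals the weighted spanning-tree polynomial T(G; y) = Σ_{G' spanning tree of G} Π_{e ∈ G'} y_e. -/

import Mathlib

open Matrix

attribute [local instance] Classical.propDecidable

/-- A finite oriented (multi)graph: each edge `e` has a tail and a head vertex. -/
structure OGraph (V E : Type*) where
  tail : E → V
  head : E → V

namespace OGraph

variable {V E : Type*} [Fintype V] [Fintype E] [DecidableEq V] [DecidableEq E]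

/-- The signed incidence matrix: `+1` if `e` points into `v` (but not out),
`-1` if `e` points out of `v` (but not in), `0` otherwise (in particular loops
give zero columns). -/
noncomputable def incidence (G : OGraph V E) : Matrix V E ℝ := fun v e =>
  if G.head e = v ∧ G.tail e ≠ v then 1
  else if G.tail e = v ∧ G.head e ≠ v then -1
  else 0

/-- The weighted Laplacian `L = D Y Dᵀ`. -/
noncomputable def lap (G : OGraph V E) (y : E → ℝ) : Matrix V V ℝ :=
  G.incidence * Matrix.diagonal y * (G.incidence)ᵀ

/-- Adjacency (disregarding orientation) through an edge of the set `S`. -/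
def adj (G : OGraph V E) (S : Finset E) (a b : V) : Prop :=
  ∃ e ∈ S, (G.tail e = a ∧ G.head e = b) ∨ (G.tail e = b ∧ G.head e = a)

/-- The edge set `S` connects all the vertices. -/
def Connects (G : OGraph V E) (S : Finset E) : Prop :=
  ∀ a b : V, Relation.ReflTransGen (G.adj S) a b

/-- `S` is (the edge set of) a spanning tree of `G`: it connects all vertices
and has exactly `|V| - 1` edges. -/
def IsSpanningTree (G : OGraph V E) (S : Finset E) : Prop :=
  G.Connects S ∧ S.card = Fintype.card V - 1

/-- The weighted spanning-tree polynomial `T(G; y)`. -/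
noncomputable def treePoly (G : OGraph V E) (y : E → ℝ) : ℝ :=
  ∑ S : Finset E, if G.IsSpanningTree S then ∏ e ∈ S, y e else 0

/-- Adjacency in the graph `G/uw` where `u` and `w` are merged. -/
def mergedAdj (G : OGraph V E) (u w : V) (S : Finset E) (a b : V) : Prop :=
  G.adj S a b ∨ (a = u ∧ b = w) ∨ (a = w ∧ b = u)

/-- `S` is a spanning tree of `G/uw` (the graph with `u` and `w` merged). -/
def IsSpanningTreeMerged (G : OGraph V E) (u w : V) (S : Finset E) : Prop :=
  (∀ a b : V, Relation.ReflTransGen (G.mergedAdj u w S) a b) ∧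
    S.card = Fintype.card V - 2

/-- The weighted spanning-tree polynomial `T(G/uw; y)` of the merged graph. -/
noncomputable def treePolyMerged (G : OGraph V E) (u w : V) (y : E → ℝ) : ℝ :=
  ∑ S : Finset E, if G.IsSpanningTreeMerged u w S then ∏ e ∈ S, y e else 0

/-- `S` is a spanning tree of the subgraph with vertices `W` and edges `E'`. -/
def IsSpanningTreeOn (G : OGraph V E) (W : Finset V) (E' : Finset E)
    (S : Finset E) : Prop :=
  S ⊆ E' ∧ (∀ a ∈ W, ∀ b ∈ W, Relation.ReflTransGen (G.adj S) a b) ∧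
    S.card = W.card - 1

/-- Spanning-tree polynomial of the subgraph `(W, E')`. -/
noncomputable def treePolyOn (G : OGraph V E) (W : Finset V) (E' : Finset E)
    (y : E → ℝ) : ℝ :=
  ∑ S : Finset E, if G.IsSpanningTreeOn W E' S then ∏ e ∈ S, y e else 0

/-- `S` is a spanning tree of the subgraph `(W, E')` with `u, w` merged. -/
def IsSpanningTreeMergedOn (G : OGraph V E) (W : Finset V) (E' : Finset E)
    (u w : V) (S : Finset E) : Prop :=
  S ⊆ E' ∧ (∀ a ∈ W, ∀ b ∈ W, Relation.ReflTransGen (G.mergedAdj u w S) a b) ∧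
    S.card = W.card - 2

/-- Spanning-tree polynomial of the subgraph `(W, E')` with `u, w` merged. -/
noncomputable def treePolyMergedOn (G : OGraph V E) (W : Finset V)
    (E' : Finset E) (u w : V) (y : E → ℝ) : ℝ :=
  ∑ S : Finset E, if G.IsSpanningTreeMergedOn W E' u w S then ∏ e ∈ S, y e else 0

end OGraph


set_option linter.unusedSectionVars false
set_option maxHeartbeats 1000000

namespace MTT

open OGraph

variable {V E : Type*} [Fintype V] [Fintype E] [DecidableEq V] [DecidableEq E]

lemma sq_sign {n : Type*} [Fintype n] [DecidableEq n] (τ : Equiv.Perm n) :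
    ((Equiv.Perm.sign τ : ℤ) : ℝ)^2 = 1 := by
  rcases Int.units_eq_one_or (Equiv.Perm.sign τ) with h | h <;> rw [h] <;> norm_num


section CB
variable {n E : Type*} [Fintype n] [Fintype E] [DecidableEq n] [DecidableEq E]

noncomputable def subDetSq (M : Matrix n E ℝ) (S : Finset E) : ℝ :=
  if h : Fintype.card n = S.card then
    (Matrix.det (M.submatrix id fun j =>
      ((Fintype.equivOfCardEq (h.trans (Fintype.card_coe S).symm)) j : E))) ^ 2
  else 0

lemma subDetSq_eq (M : Matrix n E ℝ) (S : Finset E) (σ : n ≃ {e // e ∈ S}) :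
    subDetSq M S = (det (M.submatrix id fun j => ((σ j : E))))^2 := by
  have h : Fintype.card n = S.card := by
    rw [← Fintype.card_coe]; exact Fintype.card_congr σ
  rw [subDetSq, dif_pos h]
  set σ₀ := Fintype.equivOfCardEq (h.trans (Fintype.card_coe S).symm)
  have hsub : (M.submatrix id fun j => ((σ₀ j : E)))
      = (M.submatrix id fun j => ((σ j : E))).submatrix id (σ₀.trans σ.symm) := by
    ext i j; simp [σ₀]
  rw [hsub, Matrix.det_permute', mul_pow,
    show (((Equiv.Perm.sign (σ₀.trans σ.symm) : ℤˣ) : ℝ))^2 = 1 from sq_sign _, one_mul]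


lemma cauchy_binet (M : Matrix n E ℝ) (y : E → ℝ) :
    (M * Matrix.diagonal y * Mᵀ).det
      = ∑ S : Finset E, (if S.card = Fintype.card n then (∏ e ∈ S, y e) * subDetSq M S else 0) := by
  classical
  -- Step 1: rows of L as sums of scaled rows of Mᵀ
  have hL : (M * Matrix.diagonal y * Mᵀ) = fun i => ∑ e : E, (y e * M i e) • (fun j => M j e) := by
    have h1 : (M * Matrix.diagonal y) = fun i e => M i e * y e := by
      funext i e; exact Matrix.mul_diagonal ..
    funext i j
    rw [h1]
    simp only [Matrix.mul_apply, Matrix.transpose_apply, Finset.sum_apply,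
      Pi.smul_apply, smul_eq_mul]
    exact Finset.sum_congr rfl fun e _ => by show M i e * y e * M j e = y e * M i e * M j e; ring
  -- Step 2: expand by multilinearity
  have h2 : (M * Matrix.diagonal y * Mᵀ).det
      = ∑ p : n → E, (∏ i, (y (p i) * M i (p i))) * Matrix.det (Matrix.of fun i j => M j (p i)) := by
    rw [show (M * Matrix.diagonal y * Mᵀ).det
        = Matrix.detRowAlternating (M * Matrix.diagonal y * Mᵀ) from rfl, hL]
    rw [show (Matrix.detRowAlternating (R := ℝ) (n := n))
        ((fun i => ∑ e : E, (y e * M i e) • (fun j => M j e)) : Matrix n n ℝ)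
      = (Matrix.detRowAlternating (R := ℝ) (n := n)).toMultilinearMap
        (fun i => ∑ e : E, (y e * M i e) • (fun j => M j e)) from rfl]
    rw [MultilinearMap.map_sum]
    refine Finset.sum_congr rfl fun p _ => ?_
    rw [show ((fun i => (y (p i) * M i (p i)) • (fun j => M j (p i))) :  n → n → ℝ)
        = fun i => (fun i' => y (p i') * M i' (p i')) i • ((fun i' => (fun j => M j (p i'))) i) from rfl]
    rw [MultilinearMap.map_smul_univ]
    rfl
  set F : (n → E) → ℝ :=
    fun p => (∏ i, (y (p i) * M i (p i))) * Matrix.det (Matrix.of fun i j => M j (p i)) with hF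
  -- Step 3: only injective p contribute
  have h3 : ∑ p : n → E, F p = ∑ p ∈ Finset.univ.filter (fun p : n → E => Function.Injective p), F p := by
    refine (Finset.sum_filter_of_ne fun p _ hne => ?_).symm
    by_contra hni
    apply hne
    simp only [Function.Injective, not_forall] at hni
    obtain ⟨i, i', hpe, hii⟩ := hni
    have : Matrix.det (Matrix.of fun i j => M j (p i)) = 0 :=
      Matrix.det_zero_of_row_eq hii (by funext j; simp [hpe])
    rw [hF]; simp [this]
  -- Step 4: group by image
  have h4 : ∑ p ∈ Finset.univ.filter (fun p : n → E => Function.Injective p), F p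
      = ∑ S : Finset E, ∑ p ∈ (Finset.univ.filter (fun p : n → E => Function.Injective p)).filter
          (fun p => Finset.univ.image p = S), F p :=
    (Finset.sum_fiberwise_of_maps_to (fun p _ => Finset.mem_univ _) F).symm
  rw [h2, h3, h4]
  refine Finset.sum_congr rfl fun S _ => ?_
  by_cases hcard : S.card = Fintype.card n
  · rw [if_pos hcard]
    have hc : Fintype.card n = S.card := hcard.symm
    set σ : n ≃ {e // e ∈ S} := Fintype.equivOfCardEq (hc.trans (Fintype.card_coe S).symm) with hσ
    set B : Matrix n n ℝ := M.submatrix id (fun j => ((σ j : E))) with hB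
    -- Step 5: sum over the fiber = sum over permutations
    have h5 : ∑ p ∈ (Finset.univ.filter (fun p : n → E => Function.Injective p)).filter
          (fun p => Finset.univ.image p = S), F p
        = ∑ τ : Equiv.Perm n, F (fun i => ((σ (τ i) : E))) := by
      refine Finset.sum_bij' (fun p hp => ?_) (fun τ _ => fun i => ((σ (τ i) : E))) ?_ ?_ ?_ ?_ ?_
      · -- inverse map: p ↦ permutation
        simp only [Finset.mem_filter, Finset.mem_univ, true_and] at hp
        refine Equiv.ofBijective (fun i => σ.symm ⟨p i, ?_⟩) ?_
        · rw [← hp.2]; exact Finset.mem_image_of_mem p (Finset.mem_univ i)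
        · rw [← Finite.injective_iff_bijective]
          intro a b hab
          exact hp.1 (Subtype.mk_eq_mk.mp (σ.symm.injective hab))
      · intro p hp; exact Finset.mem_univ _
      · -- forward map lands in fiber
        intro τ _
        simp only [Finset.mem_filter, Finset.mem_univ, true_and]
        constructor
        · intro a b hab
          exact τ.injective (σ.injective (Subtype.ext hab))
        · ext e
          simp only [Finset.mem_image, Finset.mem_univ, true_and]
          constructor
          · rintro ⟨i, rfl⟩; exact (σ (τ i)).2
          · intro he; exact ⟨τ.symm (σ.symm ⟨e, he⟩), by simp⟩
      · intro p hp; funext i; simp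
      · intro τ _; ext i; simp
      · intro p hp
        congr 1
        funext i
        simp only [Equiv.ofBijective_apply, Equiv.apply_symm_apply]
    rw [h5]
    -- Step 6: compute the sum over permutations
    have hdet : ∀ τ : Equiv.Perm n, Matrix.det (Matrix.of fun i j => M j ((σ (τ i) : E)))
        = ((Equiv.Perm.sign τ : ℤ) : ℝ) * Matrix.det B := by
      intro τ
      have : (Matrix.of fun i j => M j ((σ (τ i) : E))) = Bᵀ.submatrix τ id := by
        ext i j; simp [hB]
      rw [this, Matrix.det_permute, Matrix.det_transpose]
    have hy : ∀ τ : Equiv.Perm n, (∏ i, y ((σ (τ i) : E))) = ∏ e ∈ S, y e := by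
      intro τ
      rw [← Finset.prod_coe_sort S y]
      exact Equiv.prod_comp (τ.trans σ) (fun s => y (s : E))
    have h6 : ∀ τ : Equiv.Perm n, F (fun i => ((σ (τ i) : E)))
        = ((∏ e ∈ S, y e) * Matrix.det B) * (((Equiv.Perm.sign τ : ℤ) : ℝ) * ∏ i, Bᵀ (τ i) i) := by
      intro τ
      rw [hF]
      simp only
      rw [Finset.prod_mul_distrib, hy τ, hdet τ]
      have : ∀ i, Bᵀ (τ i) i = M i ((σ (τ i) : E)) := fun i => by simp [hB]
      simp only [this]
      ring
    simp only [h6]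
    rw [← Finset.mul_sum]
    have : ∑ τ : Equiv.Perm n, (((Equiv.Perm.sign τ : ℤ) : ℝ) * ∏ i, Bᵀ (τ i) i) = Matrix.det Bᵀ := by
      rw [Matrix.det_apply']
    rw [this, Matrix.det_transpose]
    have hsd : subDetSq M S = (Matrix.det B)^2 := by
      rw [subDetSq, dif_pos hc]
    rw [hsd]; ring
  · rw [if_neg hcard]
    refine Finset.sum_eq_zero fun p hp => ?_
    exfalso
    simp only [Finset.mem_filter, Finset.mem_univ, true_and] at hp
    exact hcard (by rw [← hp.2, Finset.card_image_of_injective _ hp.1, Finset.card_univ])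


end CB

lemma adj_symm (G : OGraph V E) (S : Finset E) : Symmetric (G.adj S) := by
  rintro a b ⟨e, he, h | h⟩
  · exact ⟨e, he, Or.inr h⟩
  · exact ⟨e, he, Or.inl h⟩

lemma rtg_symm (G : OGraph V E) (S : Finset E) {a b : V}
    (h : Relation.ReflTransGen (G.adj S) a b) : Relation.ReflTransGen (G.adj S) b a :=
  by induction h with
    | refl => exact Relation.ReflTransGen.refl
    | tail _ hbc ih => exact Relation.ReflTransGen.head (adj_symm G S hbc) ih

lemma incidence_loop (G : OGraph V E) {e : E} (h : G.tail e = G.head e) (x : V) :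
    G.incidence x e = 0 := by
  unfold incidence
  split_ifs with h1 h2
  · exact absurd (h.trans h1.1) h1.2
  · exact absurd (h.symm.trans h2.1) h2.2
  · rfl

lemma incidence_sq_one (G : OGraph V E) {e : E} {u : V}
    (hinc : G.tail e = u ∨ G.head e = u) (hnl : G.tail e ≠ G.head e) :
    (G.incidence u e)^2 = 1 := by
  unfold incidence
  rcases hinc with h | h
  · rw [if_neg, if_pos ⟨h, fun hh => hnl (h.trans hh.symm)⟩]
    · norm_num
    · rintro ⟨h1, -⟩; exact hnl (h.trans h1.symm)
  · rw [if_pos ⟨h, fun hh => hnl (hh.trans h.symm)⟩]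
    norm_num

lemma incidence_head (G : OGraph V E) {e : E} (hnl : G.tail e ≠ G.head e) :
    G.incidence (G.head e) e = 1 := by
  unfold incidence
  rw [if_pos ⟨rfl, fun h => hnl h⟩]

lemma incidence_tail (G : OGraph V E) {e : E} (hnl : G.tail e ≠ G.head e) :
    G.incidence (G.tail e) e = -1 := by
  unfold incidence
  rw [if_neg (fun h => hnl h.1.symm), if_pos ⟨rfl, fun h => hnl h.symm⟩]

lemma incidence_other (G : OGraph V E) {e : E} {x : V} (hx1 : x ≠ G.head e)
    (hx2 : x ≠ G.tail e) : G.incidence x e = 0 := by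
  unfold incidence
  rw [if_neg (fun h => hx1 h.1.symm), if_neg (fun h => hx2 h.1.symm)]

/-- A vertex connected to a different vertex has an incident non-loop edge. -/
lemma exists_incident (G : OGraph V E) (S : Finset E) {a b : V}
    (h : Relation.ReflTransGen (G.adj S) a b) :
    a ≠ b → ∃ e ∈ S, (G.tail e = a ∨ G.head e = a) ∧ G.tail e ≠ G.head e := by
  induction h using Relation.ReflTransGen.head_induction_on with
  | refl => intro hab; exact absurd rfl hab
  | head hxc hcb ih =>
    rename_i x c
    intro hxb
    obtain ⟨e, heS, hor⟩ := hxc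
    rcases eq_or_ne (G.tail e) (G.head e) with hl | hnl
    · have hcx : c = x := by
        rcases hor with ⟨h1, h2⟩ | ⟨h1, h2⟩
        · exact h2.symm.trans (hl.symm.trans h1)
        · exact h1.symm.trans (hl.trans h2)
      exact hcx ▸ ih (hcx ▸ hxb)
    · refine ⟨e, heS, ?_, hnl⟩
      rcases hor with ⟨h1, -⟩ | ⟨-, h2⟩
      · exact Or.inl h1
      · exact Or.inr h2

/-- The set of non-loop edges of `S` incident to `u`. -/
noncomputable def J (G : OGraph V E) (S : Finset E) (u : V) : Finset E :=
  S.filter (fun e => (G.tail e = u ∨ G.head e = u) ∧ G.tail e ≠ G.head e)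

lemma sum_J_card_le (G : OGraph V E) (S : Finset E) :
    ∑ u : V, (J G S u).card ≤ 2 * S.card := by
  have h1 : ∀ u : V, (J G S u).card
      = ∑ e ∈ S, (if (G.tail e = u ∨ G.head e = u) ∧ G.tail e ≠ G.head e then 1 else 0) := by
    intro u; rw [J, Finset.card_filter]
  simp only [h1]
  rw [Finset.sum_comm]
  have h2 : ∀ e ∈ S, ∑ u : V,
      (if (G.tail e = u ∨ G.head e = u) ∧ G.tail e ≠ G.head e then 1 else 0) ≤ 2 := by
    intro e _
    rw [← Finset.card_filter]
    calc (Finset.univ.filter fun u => (G.tail e = u ∨ G.head e = u) ∧ G.tail e ≠ G.head e).card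
        ≤ ({G.tail e, G.head e} : Finset V).card := by
          apply Finset.card_le_card
          intro u hu
          simp only [Finset.mem_filter] at hu
          rcases hu.2.1 with h | h
          · simp [← h]
          · simp [← h]
      _ ≤ 2 := (Finset.card_insert_le _ _).trans (by simp)
  calc ∑ e ∈ S, ∑ u : V, (if (G.tail e = u ∨ G.head e = u) ∧ G.tail e ≠ G.head e then 1 else 0)
      ≤ ∑ e ∈ S, 2 := Finset.sum_le_sum h2
    _ = 2 * S.card := by rw [Finset.sum_const, smul_eq_mul, mul_comm]

lemma exists_leaf (G : OGraph V E) (S : Finset E) (v : V) (hconn : G.Connects S)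
    (hV : 1 < Fintype.card V) (hcard : S.card + 1 = Fintype.card V) :
    ∃ u, u ≠ v ∧ ∃ e, J G S u = {e} := by
  have hne : ∀ u : V, 1 ≤ (J G S u).card := by
    intro u
    obtain ⟨b, hb⟩ := Fintype.exists_ne_of_one_lt_card hV u
    obtain ⟨e, heS, hinc, hnl⟩ := exists_incident G S (hconn u b) (Ne.symm hb)
    exact Finset.card_pos.mpr ⟨e, Finset.mem_filter.mpr ⟨heS, hinc, hnl⟩⟩
  by_contra hno
  push_neg at hno
  have h2 : ∀ u : V, u ≠ v → 2 ≤ (J G S u).card := by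
    intro u hu
    rcases Nat.lt_or_ge (J G S u).card 2 with h | h
    · have h1 := hne u
      have hcard1 : (J G S u).card = 1 := by omega
      obtain ⟨e, he⟩ := Finset.card_eq_one.mp hcard1
      exact absurd he (hno u hu e)
    · exact h
  have hsum : ∑ u : V, (J G S u).card ≤ 2 * S.card := sum_J_card_le G S
  have hv : 1 ≤ (J G S v).card := hne v
  have hbig : 2 * (Fintype.card V - 1) + 1 ≤ ∑ u : V, (J G S u).card := by
    rw [← Finset.sum_erase_add Finset.univ _ (Finset.mem_univ v)]
    have h3 : 2 * (Fintype.card V - 1) ≤ ∑ u ∈ Finset.univ.erase v, (J G S u).card := by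
      have := Finset.card_nsmul_le_sum (Finset.univ.erase v) (fun u => (J G S u).card) 2
        (fun u hu => h2 u (Finset.mem_erase.mp hu).1)
      rw [Finset.card_erase_of_mem (Finset.mem_univ v), Finset.card_univ, smul_eq_mul] at this
      omega
    omega
  omega

lemma det_eq_zero_of_not_connects (G : OGraph V E) (v : V) (S : Finset E)
    (hnc : ¬ G.Connects S) (σ : {x : V // x ≠ v} ≃ {e // e ∈ S}) :
    Matrix.det (Matrix.of fun (i : {x : V // x ≠ v}) j => G.incidence i.val ((σ j : E))) = 0 := by
  have ⟨a, hav⟩ : ∃ a, ¬ Relation.ReflTransGen (G.adj S) a v := by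
    by_contra hall
    push_neg at hall
    exact hnc fun x y => (hall x).trans (rtg_symm G S (hall y))
  have ha : a ≠ v := fun h => hav (h ▸ Relation.ReflTransGen.refl)
  rw [← Matrix.exists_vecMul_eq_zero_iff]
  refine ⟨fun i => if Relation.ReflTransGen (G.adj S) a i.val then 1 else 0, ?_, ?_⟩
  · intro h0
    have := congrFun h0 ⟨a, ha⟩
    simp only [if_pos Relation.ReflTransGen.refl] at this
    exact one_ne_zero this
  · funext j
    set e : E := (σ j : E) with he_def
    have heS : e ∈ S := (σ j).2
    set f : V → ℝ := fun u => (if Relation.ReflTransGen (G.adj S) a u then 1 else 0)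
      * G.incidence u e with hf
    have hsum : (Matrix.vecMul (fun i => if Relation.ReflTransGen (G.adj S) a i.val then 1 else 0)
        (Matrix.of fun (i : {x : V // x ≠ v}) j => G.incidence i.val ((σ j : E)))) j
        = ∑ i : {x : V // x ≠ v}, f i.val := by
      simp [Matrix.vecMul, dotProduct, hf, he_def]
    rw [Pi.zero_apply, hsum]
    have hfv : f v = 0 := by rw [hf]; simp [if_neg hav]
    have hsub : ∑ i : {x : V // x ≠ v}, f i.val = ∑ u : V, f u := by
      rw [(Finset.sum_subtype (Finset.univ.erase v) (fun x => by simp) f).symm,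
        Finset.sum_erase _ hfv]
    rw [hsub]
    rcases eq_or_ne (G.tail e) (G.head e) with hl | hnl
    · exact Finset.sum_eq_zero fun u _ => by rw [hf]; simp [incidence_loop G hl]
    · have hout : ∀ u ∈ (Finset.univ : Finset V), u ∉ ({G.head e, G.tail e} : Finset V)
          → f u = 0 := by
        intro u _ hu
        simp only [Finset.mem_insert, Finset.mem_singleton, not_or] at hu
        rw [hf]
        simp only
        rw [incidence_other G hu.1 hu.2, mul_zero]
      rw [← Finset.sum_subset (Finset.subset_univ _) hout,
        Finset.sum_pair (Ne.symm hnl)]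
      have hiff : Relation.ReflTransGen (G.adj S) a (G.head e)
          ↔ Relation.ReflTransGen (G.adj S) a (G.tail e) := by
        have hadj : G.adj S (G.tail e) (G.head e) := ⟨e, heS, Or.inl ⟨rfl, rfl⟩⟩
        constructor
        · exact fun h => h.trans (Relation.ReflTransGen.single (adj_symm G S hadj))
        · exact fun h => h.trans (Relation.ReflTransGen.single hadj)
      rw [hf]
      simp only
      rw [incidence_head G hnl, incidence_tail G hnl]
      by_cases hc : Relation.ReflTransGen (G.adj S) a (G.head e)
      · rw [if_pos hc, if_pos (hiff.mp hc)]; ring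
      · rw [if_neg hc, if_neg (fun h => hc (hiff.mpr h))]; ring

noncomputable def vmap (u w : V) (hw : w ≠ u) : V → {x : V // x ≠ u} := fun x =>
  if h : x = u then ⟨w, hw⟩ else ⟨x, h⟩

lemma vmap_ne {u w : V} (hw : w ≠ u) {x : V} (h : x ≠ u) : vmap u w hw x = ⟨x, h⟩ := dif_neg h

lemma vmap_u {u w : V} (hw : w ≠ u) : vmap u w hw u = ⟨w, hw⟩ := dif_pos rfl

noncomputable def contract (G : OGraph V E) (u w : V) (hw : w ≠ u) (S : Finset E) (e : E) :
    OGraph {x : V // x ≠ u} {f : E // f ∈ S ∧ f ≠ e} :=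
  ⟨fun f => vmap u w hw (G.tail f.val), fun f => vmap u w hw (G.head f.val)⟩

lemma contract_incidence (G : OGraph V E) {u w : V} (hw : w ≠ u) (S : Finset E) (e : E)
    (hloopu : ∀ f ∈ S, f ≠ e → (G.tail f = u ∨ G.head f = u) → G.tail f = G.head f)
    (x : {x : V // x ≠ u}) (f : {f : E // f ∈ S ∧ f ≠ e}) :
    (contract G u w hw S e).incidence x f = G.incidence x.val f.val := by
  by_cases hor : G.tail f.val = u ∨ G.head f.val = u
  · have hl : G.tail f.val = G.head f.val := hloopu f.val f.2.1 f.2.2 hor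
    have hl' : (contract G u w hw S e).tail f = (contract G u w hw S e).head f :=
      congrArg (vmap u w hw) hl
    rw [incidence_loop _ hl', incidence_loop G hl]
  · push_neg at hor
    have h1 : (contract G u w hw S e).head f = x ↔ G.head f.val = x.val := by
      show vmap u w hw (G.head f.val) = x ↔ _
      rw [vmap_ne hw hor.2]
      exact ⟨fun h => congrArg Subtype.val h, fun h => Subtype.ext h⟩
    have h2 : (contract G u w hw S e).tail f = x ↔ G.tail f.val = x.val := by
      show vmap u w hw (G.tail f.val) = x ↔ _
      rw [vmap_ne hw hor.1]
      exact ⟨fun h => congrArg Subtype.val h, fun h => Subtype.ext h⟩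
    unfold incidence
    rw [if_congr (and_congr h1 (not_congr h2)) rfl rfl,
      if_congr (and_congr h2 (not_congr h1)) rfl rfl]

lemma contract_connects (G : OGraph V E) {u w : V} (hw : w ≠ u) (S : Finset E) (e : E)
    (hew : (G.tail e = u ∧ G.head e = w) ∨ (G.head e = u ∧ G.tail e = w))
    (hconn : G.Connects S) : (contract G u w hw S e).Connects Finset.univ := by
  have key : ∀ z, (G.tail e = z ∨ G.head e = z) → vmap u w hw z = ⟨w, hw⟩ := by
    intro z hz
    rcases hew with ⟨ht, hh⟩ | ⟨hh, ht⟩ <;> rcases hz with h | h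
    · rw [show z = u from h ▸ ht]; exact vmap_u hw
    · rw [show z = w from h ▸ hh]; exact vmap_ne hw hw
    · rw [show z = w from h ▸ ht]; exact vmap_ne hw hw
    · rw [show z = u from h ▸ hh]; exact vmap_u hw
  have hmapadj : ∀ x y, G.adj S x y → Relation.ReflTransGen
      ((contract G u w hw S e).adj Finset.univ) (vmap u w hw x) (vmap u w hw y) := by
    rintro x y ⟨f, hfS, hor⟩
    by_cases hfe : f = e
    · subst hfe
      have hxy : vmap u w hw x = vmap u w hw y := by
        rcases hor with ⟨h1, h2⟩ | ⟨h1, h2⟩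
        · rw [key x (Or.inl h1), key y (Or.inr h2)]
        · rw [key x (Or.inr h2), key y (Or.inl h1)]
      rw [hxy]
    · refine Relation.ReflTransGen.single ⟨⟨f, hfS, hfe⟩, Finset.mem_univ _, ?_⟩
      rcases hor with ⟨h1, h2⟩ | ⟨h1, h2⟩
      · exact Or.inl ⟨congrArg (vmap u w hw) h1, congrArg (vmap u w hw) h2⟩
      · exact Or.inr ⟨congrArg (vmap u w hw) h1, congrArg (vmap u w hw) h2⟩
  have hmap : ∀ x y, Relation.ReflTransGen (G.adj S) x y → Relation.ReflTransGen
      ((contract G u w hw S e).adj Finset.univ) (vmap u w hw x) (vmap u w hw y) := by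
    intro x y h
    induction h with
    | refl => exact Relation.ReflTransGen.refl
    | tail _ h2 ih => exact ih.trans (hmapadj _ _ h2)
  intro a b
  have := hmap a.val b.val (hconn a.val b.val)
  rwa [vmap_ne hw a.2, vmap_ne hw b.2, Subtype.eta, Subtype.eta] at this

lemma card_ne_eq {α : Type*} [Fintype α] [DecidableEq α] (a : α) :
    Fintype.card {x : α // x ≠ a} = Fintype.card α - 1 := by
  have h1 : Fintype.card {x : α // ¬ (x = a)} = Fintype.card α - Fintype.card {x : α // x = a} :=
    Fintype.card_subtype_compl _
  have h2 : Fintype.card {x : α // x = a} = 1 := Fintype.card_subtype_eq a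
  have h3 : Fintype.card {x : α // x ≠ a} = Fintype.card {x : α // ¬ (x = a)} :=
    Fintype.card_congr (Equiv.subtypeEquivRight (fun x => Iff.rfl))
  omega

lemma sq_det_submatrix {m n : Type*} [Fintype m] [DecidableEq m] [Fintype n] [DecidableEq n]
    (e₁ e₂ : m ≃ n) (M : Matrix n n ℝ) :
    (Matrix.det (M.submatrix e₁ e₂))^2 = (Matrix.det M)^2 := by
  have h : M.submatrix e₁ e₂ = (M.submatrix e₂ e₂).submatrix (e₁.trans e₂.symm) id := by
    ext i j; simp
  rw [h, Matrix.det_permute, Matrix.det_submatrix_equiv_self, mul_pow,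
    show (((Equiv.Perm.sign (e₁.trans e₂.symm) : ℤˣ) : ℝ))^2 = 1 from sq_sign _, one_mul]

lemma det_sq_eq_one (N : ℕ) :
    ∀ {V E : Type*} [Fintype V] [Fintype E] [DecidableEq V] [DecidableEq E]
      (G : OGraph V E) (v : V) (S : Finset E), Fintype.card V = N + 1 → S.card = N →
      G.Connects S → ∀ σ : {x : V // x ≠ v} ≃ {e // e ∈ S},
      (Matrix.det (Matrix.of fun (i : {x : V // x ≠ v}) j =>
        G.incidence i.val ((σ j : E))))^2 = 1 := by
  induction N with
  | zero =>
    intro V E _ _ _ _ G v S hV hS hconn σ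
    haveI : IsEmpty {x : V // x ≠ v} :=
      ⟨fun x => x.2 (Fintype.card_le_one_iff.mp (by omega) x.val v)⟩
    rw [Matrix.det_isEmpty]; norm_num
  | succ N ih =>
    intro V E _ _ _ _ G v S hV hS hconn σ
    obtain ⟨u, huv, e, hJ⟩ := exists_leaf G S v hconn (by omega) (by omega)
    have heJ : e ∈ J G S u := hJ ▸ Finset.mem_singleton_self e
    rw [J, Finset.mem_filter] at heJ
    obtain ⟨heS, hinc, hnl⟩ := heJ
    set w := if G.tail e = u then G.head e else G.tail e with hwdef
    have hw : w ≠ u := by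
      by_cases h : G.tail e = u
      · rw [hwdef, if_pos h]; intro hh; exact hnl (h.trans hh.symm)
      · rw [hwdef, if_neg h]; exact h
    have hew : (G.tail e = u ∧ G.head e = w) ∨ (G.head e = u ∧ G.tail e = w) := by
      by_cases h : G.tail e = u
      · exact Or.inl ⟨h, by rw [hwdef, if_pos h]⟩
      · rcases hinc with h1 | h1
        · exact absurd h1 h
        · exact Or.inr ⟨h1, by rw [hwdef, if_neg h]⟩
    have hloopu : ∀ f ∈ S, f ≠ e → (G.tail f = u ∨ G.head f = u) → G.tail f = G.head f := by
      intro f hfS hfe hor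
      by_contra hnlf
      exact hfe (Finset.mem_singleton.mp (hJ ▸ Finset.mem_filter.mpr ⟨hfS, hor, hnlf⟩))
    set G' := contract G u w hw S e with hG'
    set v' : {x : V // x ≠ u} := ⟨v, Ne.symm huv⟩ with hv'
    -- cardinalities
    have hcV' : Fintype.card {x : V // x ≠ u} = N + 1 := by
      rw [card_ne_eq]; omega
    have hcE' : Fintype.card {f : E // f ∈ S ∧ f ≠ e} = N := by
      have h1 : Fintype.card {f : E // f ∈ S.erase e} = N := by
        rw [Fintype.card_coe, Finset.card_erase_of_mem heS, hS]
        omega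
      rw [← h1]
      exact Fintype.card_congr (Equiv.subtypeEquivRight (fun f => by
        simp [Finset.mem_erase, and_comm])).symm
    have hcX : Fintype.card {x : {x : V // x ≠ u} // x ≠ v'} = N := by
      rw [card_ne_eq, hcV']
      omega
    set X := {x : {x : V // x ≠ u} // x ≠ v'} with hX
    -- equivalence for columns of the minor
    set ce0 : X ≃ {f : E // f ∈ S ∧ f ≠ e} :=
      Fintype.equivOfCardEq (by rw [hcX, hcE']) with hce0
    set σ' := ce0.trans (Equiv.subtypeUnivEquiv
      (fun f : {f : E // f ∈ S ∧ f ≠ e} => Finset.mem_univ f)).symm with hσ'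
    have hih := ih G' v' Finset.univ hcV' (by rw [Finset.card_univ, hcE']) 
      (contract_connects G hw S e hew hconn) σ'
    -- equivalences to put the matrix in block form
    have hXne : ∀ x : X, x.val.val ≠ v := fun x h => x.2 (Subtype.ext h)
    set ρ : Unit ⊕ X ≃ {x : V // x ≠ v} :=
      { toFun := fun s => match s with
          | Sum.inl _ => ⟨u, huv⟩
          | Sum.inr x => ⟨x.val.val, hXne x⟩
        invFun := fun i => if h : i.val = u then Sum.inl ()
          else Sum.inr ⟨⟨i.val, h⟩, fun hh => i.2 (congrArg Subtype.val hh)⟩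
        left_inv := by
          rintro (⟨⟩ | x)
          · simp
          · have hx : x.val.val ≠ u := x.val.2
            simp only [dif_neg hx]; rfl
        right_inv := by
          intro i
          by_cases h : i.val = u
          · simp only [dif_pos h]; exact Subtype.ext h.symm
          · simp only [dif_neg h] } with hρ
    set ce : X ≃ {f : E // f ∈ S ∧ f ≠ e} :=
      σ'.trans (Equiv.subtypeUnivEquiv (fun f => Finset.mem_univ f)) with hce
    set κ : Unit ⊕ {f : E // f ∈ S ∧ f ≠ e} ≃ {e' : E // e' ∈ S} :=
      { toFun := fun s => match s with
          | Sum.inl _ => ⟨e, heS⟩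
          | Sum.inr f => ⟨f.val, f.2.1⟩
        invFun := fun g => if h : g.val = e then Sum.inl ()
          else Sum.inr ⟨g.val, g.2, h⟩
        left_inv := by
          rintro (⟨⟩ | f)
          · simp
          · simp only [dif_neg f.2.2]
        right_inv := by
          intro g
          by_cases h : g.val = e
          · simp only [dif_pos h]; exact Subtype.ext h.symm
          · simp only [dif_neg h] } with hκ
    set χ : Unit ⊕ X ≃ {x : V // x ≠ v} :=
      ((Equiv.sumCongr (Equiv.refl Unit) ce).trans κ).trans σ.symm with hχ
    set A := Matrix.of fun (i : {x : V // x ≠ v}) j => G.incidence i.val ((σ j : E)) with hA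
    have hzero : ∀ f : {f : E // f ∈ S ∧ f ≠ e}, G.incidence u f.val = 0 := by
      intro f
      by_cases hor : G.tail f.val = u ∨ G.head f.val = u
      · exact incidence_loop G (hloopu f.val f.2.1 f.2.2 hor) u
      · push_neg at hor
        exact incidence_other G (Ne.symm hor.2) (Ne.symm hor.1)
    have hblock : A.submatrix ρ χ = Matrix.fromBlocks
        (Matrix.of fun (_ : Unit) (_ : Unit) => G.incidence u e) 0
        (Matrix.of fun (x : X) (_ : Unit) => G.incidence x.val.val e)
        (Matrix.of fun (i : X) (j : X) => G'.incidence i.val ((σ' j).val)) := by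
      ext s t
      rcases s with s | i <;> rcases t with t | j
      · show A (ρ (Sum.inl ())) (χ (Sum.inl ())) = G.incidence u e
        show G.incidence u ((σ (σ.symm ⟨e, heS⟩)) : E) = G.incidence u e
        rw [Equiv.apply_symm_apply]
      · show A (ρ (Sum.inl ())) (χ (Sum.inr j)) = 0
        show G.incidence u ((σ (σ.symm ⟨(ce j).val, (ce j).2.1⟩)) : E) = 0
        rw [Equiv.apply_symm_apply]
        exact hzero (ce j)
      · show A (ρ (Sum.inr i)) (χ (Sum.inl ())) = G.incidence i.val.val e
        show G.incidence i.val.val ((σ (σ.symm ⟨e, heS⟩)) : E) = G.incidence i.val.val e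
        rw [Equiv.apply_symm_apply]
      · show A (ρ (Sum.inr i)) (χ (Sum.inr j)) = G'.incidence i.val ((σ' j).val)
        show G.incidence i.val.val ((σ (σ.symm ⟨(ce j).val, (ce j).2.1⟩)) : E)
          = G'.incidence i.val ((σ' j).val)
        rw [Equiv.apply_symm_apply]
        rw [hG', contract_incidence G hw S e hloopu i.val ((σ' j).val)]
        rfl
    calc (Matrix.det A)^2 = (Matrix.det (A.submatrix ρ χ))^2 := (sq_det_submatrix ρ χ A).symm
      _ = ((Matrix.det (Matrix.of fun (_ : Unit) (_ : Unit) => G.incidence u e))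
            * (Matrix.det (Matrix.of fun (i : X) (j : X) => G'.incidence i.val ((σ' j).val))))^2 := by
          rw [hblock, Matrix.det_fromBlocks_zero₁₂]
      _ = (G.incidence u e)^2
            * (Matrix.det (Matrix.of fun (i : X) (j : X) => G'.incidence i.val ((σ' j).val)))^2 := by
          rw [Matrix.det_unique, Matrix.of_apply]; ring
      _ = 1 := by rw [incidence_sq_one G hinc hnl, hih, mul_one]


end MTT

/-- **Weighted Matrix-Tree theorem.** For any vertex `v`, the determinant of the
reduced Laplacian `L(v|v)` equals the weighted spanning-tree polynomial. -/
theorem weighted_matrix_tree (V E : Type*) [Fintype V] [Fintype E]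
    [DecidableEq V] [DecidableEq E] (G : OGraph V E) (y : E → ℝ) (v : V) :
    ((G.lap y).submatrix (fun i : {x : V // x ≠ v} => (i : V))
        (fun j : {x : V // x ≠ v} => (j : V))).det = G.treePoly y := by
  classical
  set M : Matrix {x : V // x ≠ v} E ℝ := Matrix.of fun i e => G.incidence i.val e with hM
  have h1 : (G.lap y).submatrix (fun i : {x : V // x ≠ v} => (i : V))
      (fun j : {x : V // x ≠ v} => (j : V)) = M * Matrix.diagonal y * Mᵀ := by
    have hd : (G.incidence * Matrix.diagonal y) = fun i e => G.incidence i e * y e := by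
      funext i e; exact Matrix.mul_diagonal ..
    have hd' : (M * Matrix.diagonal y) = fun i e => M i e * y e := by
      funext i e; exact Matrix.mul_diagonal ..
    funext i j
    show (G.incidence * Matrix.diagonal y * (G.incidence)ᵀ) i.val j.val = _
    rw [show (M * Matrix.diagonal y * Mᵀ) = (M * Matrix.diagonal y) * Mᵀ from rfl, hd, hd']
    show ∑ e, G.incidence i.val e * y e * G.incidence j.val e = ∑ e, M i e * y e * M j e
    exact Finset.sum_congr rfl fun e _ => rfl
  rw [h1, MTT.cauchy_binet M y, OGraph.treePoly]
  have hcardn : Fintype.card {x : V // x ≠ v} = Fintype.card V - 1 := MTT.card_ne_eq v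
  haveI : Nonempty V := ⟨v⟩
  have hVpos : 1 ≤ Fintype.card V := Fintype.card_pos
  refine Finset.sum_congr rfl fun S _ => ?_
  by_cases hc : S.card = Fintype.card {x : V // x ≠ v}
  · rw [if_pos hc]
    have hcV : Fintype.card V = S.card + 1 := by omega
    set σ0 : {x : V // x ≠ v} ≃ {e : E // e ∈ S} :=
      Fintype.equivOfCardEq (hc.symm.trans (Fintype.card_coe S).symm) with hσ0
    have hsd : MTT.subDetSq M S
        = (Matrix.det (Matrix.of fun (i : {x : V // x ≠ v}) j =>
            G.incidence i.val ((σ0 j : E))))^2 := by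
      rw [MTT.subDetSq_eq M S σ0]
      rfl
    by_cases hconn : G.Connects S
    · have hst : G.IsSpanningTree S := ⟨hconn, by rw [hc, hcardn]⟩
      rw [if_pos hst, hsd, MTT.det_sq_eq_one S.card G v S hcV rfl hconn σ0, mul_one]
    · have hst : ¬ G.IsSpanningTree S := fun h => hconn h.1
      rw [if_neg hst, hsd, MTT.det_eq_zero_of_not_connects G v S hconn σ0]
      norm_num
  · rw [if_neg hc]
    have hst : ¬ G.IsSpanningTree S := fun h => hc (by rw [h.2, hcardn])
    rw [if_neg hst]
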